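/- arXiv:1111.4189 — 2 statements merged into one kernel-verified Lean document; each statement's English description precedes it below -/
import Mathlib

section
/- (Lemma 1) Let the total number of chips in a two-color Babylon position be n = 2m. Any position with an even number of stacks in which exactly one stack X has color x, the height of X exceeds m, and at least one stack has the other color y, is not a first-player win; that is, the player to move loses with best play. -/
/-- A chip color: `true` = red, `false` = blue.  A stack is a nonempty list of
chips, the head of the list being the top chip; the color of a stack is the
color of its top chip.  A position is a finite multiset of stacks. -/
abbrev Stack := List Bool

abbrev Position := Multiset Stack

/-- A legal move replaces two stacks `s` and `t` that have equal length or
equal top color by the single concatenated stack `s ++ t`. -/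
def Move (P Q : Position) : Prop :=
  ∃ s t : Stack, s ≠ [] ∧ t ≠ [] ∧ s ∈ P ∧ t ∈ P.erase s ∧
    (s.length = t.length ∨ s.head? = t.head?) ∧
    Q = (s ++ t) ::ₘ (P.erase s).erase t

/-- Auxiliary predicate, with the number of stacks as fuel: the player to move
wins iff there is a legal move to a position that is not a first-player win. -/
def FirstWinAux : ℕ → Position → Prop
  | 0, _ => False
  | n + 1, P => ∃ Q, Move P Q ∧ ¬ FirstWinAux n Q

/-- The position is a first-player win: the player to move has a winning
strategy.  Since each move decreases the number of stacks by exactly one,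
`Multiset.card P` is enough fuel. -/
def FirstWin (P : Position) : Prop := FirstWinAux (Multiset.card P) P

/-- The initial position with `p` red singleton stacks and `q` blue
singleton stacks. -/
def initPos (p q : ℕ) : Position :=
  Multiset.replicate p [true] + Multiset.replicate q [false]

/-- The invariant preserved during play. -/
def BabInv (m : ℕ) (x : Bool) (P : Position) : Prop :=
  (∀ s ∈ P, s ≠ []) ∧ (P.map List.length).sum = 2 * m ∧
  Multiset.card (P.filter (fun s => s.head? = some x)) = 1 ∧
  (∃ X ∈ P, X.head? = some x ∧ m < X.length) ∧
  (∃ t ∈ P, t.head? = some (!x))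

lemma head_eq_notx {x : Bool} {s : Stack} (h0 : s ≠ []) (hx : s.head? ≠ some x) :
    s.head? = some (!x) := by
  cases s with
  | nil => exact absurd rfl h0
  | cons a l =>
    simp only [List.head?] at *
    cases a <;> cases x <;> simp_all

lemma unique_of_filter_one {P : Position} {p : Stack → Prop} [DecidablePred p]
    (h : Multiset.card (P.filter p) = 1)
    {s t : Stack} (hs : s ∈ P) (hps : p s) (ht : t ∈ P) (hpt : p t) : s = t := by
  obtain ⟨a, ha⟩ := Multiset.card_eq_one.mp h
  have hs' : s ∈ P.filter p := Multiset.mem_filter.mpr ⟨hs, hps⟩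
  have ht' : t ∈ P.filter p := Multiset.mem_filter.mpr ⟨ht, hpt⟩
  rw [ha, Multiset.mem_singleton] at hs' ht'
  rw [hs', ht']

lemma filter_erase_zero {x : Bool} {P : Position} {X : Stack}
    (hone : Multiset.card (P.filter (fun s => s.head? = some x)) = 1)
    (hX : X ∈ P) (hXx : X.head? = some x) :
    ∀ t ∈ P.erase X, t.head? ≠ some x := by
  intro t ht htx
  by_cases hEq : t = X
  · subst hEq
    have h1 : 0 < Multiset.count t (P.erase t) := Multiset.count_pos.mpr ht
    rw [Multiset.count_erase_self] at h1
    have h2 : Multiset.count t (P.filter (fun s => s.head? = some x))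
        = Multiset.count t P := Multiset.count_filter_of_pos htx
    have h3 := Multiset.count_le_card t (P.filter (fun s => s.head? = some x))
    omega
  · exact hEq (unique_of_filter_one hone (Multiset.mem_of_mem_erase ht) htx hX hXx)

/-- Any stack other than the big one is short. -/
lemma small_of_mem_erase {m : ℕ} {P : Position} {X : Stack}
    (hsum : (P.map List.length).sum = 2 * m)
    (hX : X ∈ P) (hXm : m < X.length)
    {s : Stack} (hs : s ∈ P.erase X) : s.length < m := by
  have hPe : X ::ₘ P.erase X = P := Multiset.cons_erase hX
  have hsum' : X.length + ((P.erase X).map List.length).sum = 2 * m := by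
    rw [← hsum, ← hPe]; simp
  have hle : s.length ≤ ((P.erase X).map List.length).sum :=
    Multiset.single_le_sum (fun y _ => Nat.zero_le y) _
      (Multiset.mem_map_of_mem _ hs)
  omega

/-- Structure of any legal move from an invariant position: it merges two
`y`-colored stacks. -/
lemma move_struct {m : ℕ} {x : Bool} {P Q : Position}
    (hI : BabInv m x P) (hmv : Move P Q) :
    ∃ s t R, s ≠ [] ∧ s.head? = some (!x) ∧ t.head? = some (!x) ∧
      P = s ::ₘ t ::ₘ R ∧ Q = (s ++ t) ::ₘ R := by
  obtain ⟨hne, hsum, hone, ⟨X, hXP, hXx, hXm⟩, _⟩ := hI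
  obtain ⟨s, t, hs0, ht0, hsP, htP, hcond, hQ⟩ := hmv
  have htP' : t ∈ P := Multiset.mem_of_mem_erase htP
  -- s does not have color x
  have hsx : s.head? ≠ some x := by
    intro hsx
    have hsX : s = X := unique_of_filter_one hone hsP hsx hXP hXx
    subst hsX
    have htx : t.head? ≠ some x := filter_erase_zero hone hsP hsx t htP
    have hsmall : t.length < m := small_of_mem_erase hsum hsP hXm htP
    rcases hcond with h | h
    · omega
    · exact htx (h ▸ hsx)
  have htx : t.head? ≠ some x := by
    intro htx
    have htX : t = X := unique_of_filter_one hone htP' htx hXP hXx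
    subst htX
    have hsne : s ≠ t := fun h => hsx (h ▸ htx)
    have hs' : s ∈ P.erase t := (Multiset.mem_erase_of_ne hsne).mpr hsP
    have hsmall : s.length < m := small_of_mem_erase hsum htP' hXm hs'
    rcases hcond with h | h
    · omega
    · exact hsx (h.trans htx)
  refine ⟨s, t, (P.erase s).erase t, hs0, head_eq_notx hs0 hsx,
    head_eq_notx ht0 htx, ?_, hQ⟩
  rw [Multiset.cons_erase htP, Multiset.cons_erase hsP]

lemma card_move {P Q : Position} (hmv : Move P Q) :
    Multiset.card Q + 1 = Multiset.card P := by
  obtain ⟨s, t, _, _, hsP, htP, _, hQ⟩ := hmv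
  subst hQ
  rw [← Multiset.cons_erase hsP, ← Multiset.cons_erase htP]
  simp

lemma babinv_move {m : ℕ} {x : Bool} {P Q : Position}
    (hI : BabInv m x P) (hmv : Move P Q) : BabInv m x Q := by
  obtain ⟨s, t, R, hs0, hsy, hty, hP, hQ⟩ := move_struct hI hmv
  obtain ⟨hne, hsum, hone, ⟨X, hXP, hXx, hXm⟩, _⟩ := hI
  have hsty : (s ++ t).head? = some (!x) := by
    cases s with
    | nil => exact absurd rfl hs0
    | cons a l => simpa using hsy
  have hnx : ¬((!x) = x) := by cases x <;> decide
  have hstx : ¬((s ++ t).head? = some x) := by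
    rw [hsty]; simp [hnx]
  have hsyx : ¬(s.head? = some x) := by rw [hsy]; simp [hnx]
  have htyx : ¬(t.head? = some x) := by rw [hty]; simp [hnx]
  subst hP hQ
  refine ⟨?_, ?_, ?_, ?_, ⟨s ++ t, Multiset.mem_cons_self _ _, hsty⟩⟩
  · intro u hu
    rcases Multiset.mem_cons.mp hu with h | h
    · subst h; simp [hs0]
    · exact hne u (Multiset.mem_cons.mpr (Or.inr (Multiset.mem_cons.mpr (Or.inr h))))
  · simp only [Multiset.map_cons, Multiset.sum_cons, List.length_append] at hsum ⊢
    omega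
  · rw [Multiset.filter_cons_of_neg (p := fun u : Stack => List.head? u = some x) _ hstx]
    rw [Multiset.filter_cons_of_neg (p := fun u : Stack => List.head? u = some x) _ hsyx,
      Multiset.filter_cons_of_neg (p := fun u : Stack => List.head? u = some x) _ htyx] at hone
    exact hone
  · refine ⟨X, ?_, hXx, hXm⟩
    have : X ∈ s ::ₘ t ::ₘ R := hXP
    rcases Multiset.mem_cons.mp this with h | h
    · exact absurd (h ▸ hXx) hsyx
    rcases Multiset.mem_cons.mp h with h' | h'
    · exact absurd (h' ▸ hXx) htyx
    · exact Multiset.mem_cons.mpr (Or.inr h')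

lemma inv_sum_move {m : ℕ} {x : Bool} {P Q : Position}
    (hI : BabInv m x P) (hmv : Move P Q) :
    BabInv m x Q ∧ Multiset.card Q + 1 = Multiset.card P :=
  ⟨babinv_move hI hmv, card_move hmv⟩

/-- When at least three stacks remain, there is a legal move. -/
lemma exists_move {m : ℕ} {x : Bool} {P : Position}
    (hI : BabInv m x P) (h3 : 3 ≤ Multiset.card P) : ∃ Q, Move P Q := by
  obtain ⟨hne, hsum, hone, ⟨X, hXP, hXx, hXm⟩, _⟩ := hI
  have hc : 2 ≤ Multiset.card (P.erase X) := by
    have := Multiset.card_erase_of_mem hXP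
    rw [Nat.pred_eq_sub_one] at this
    omega
  have hpos : 0 < Multiset.card (P.erase X) := by omega
  obtain ⟨s, hs⟩ := Multiset.card_pos_iff_exists_mem.mp hpos
  have hc2 : 0 < Multiset.card ((P.erase X).erase s) := by
    have := Multiset.card_erase_of_mem hs
    rw [Nat.pred_eq_sub_one] at this
    omega
  obtain ⟨t, ht⟩ := Multiset.card_pos_iff_exists_mem.mp hc2
  have hsP : s ∈ P := Multiset.mem_of_mem_erase hs
  have htPe : t ∈ P.erase s := by
    have : t ∈ (P.erase s).erase X := by rwa [Multiset.erase_comm] at ht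
    exact Multiset.mem_of_mem_erase this
  have hsy : s.head? = some (!x) :=
    head_eq_notx (hne s hsP) (filter_erase_zero hone hXP hXx s hs)
  have hty : t.head? = some (!x) :=
    head_eq_notx (hne t (Multiset.mem_of_mem_erase htPe))
      (filter_erase_zero hone hXP hXx t (Multiset.mem_of_mem_erase ht))
  exact ⟨_, s, t, hne s hsP, hne t (Multiset.mem_of_mem_erase htPe),
    hsP, htPe, Or.inr (hsy.trans hty.symm), rfl⟩

/-- Main induction: invariant positions with an even number of stacks are
losses for the player to move; with an odd number, wins. -/
lemma key (m : ℕ) (x : Bool) :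
    ∀ n (P : Position), BabInv m x P → Multiset.card P = n →
      (Even n → ¬ FirstWinAux n P) ∧ (Odd n → FirstWinAux n P) := by
  intro n
  induction n with
  | zero =>
    intro P hI hcard
    obtain ⟨_, _, _, ⟨X, hXP, _, _⟩, _⟩ := hI
    have : 0 < Multiset.card P := Multiset.card_pos_iff_exists_mem.mpr ⟨X, hXP⟩
    omega
  | succ n ih =>
    intro P hI hcard
    constructor
    · intro heven hFW
      obtain ⟨Q, hmv, hnFW⟩ := hFW
      obtain ⟨hIQ, hcQ⟩ := inv_sum_move hI hmv
      have hodd : Odd n := Nat.Even.sub_odd (by omega) heven odd_one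
      exact hnFW ((ih Q hIQ (by omega)).2 hodd)
    · intro hodd
      have h2 : 2 ≤ Multiset.card P := by
        obtain ⟨hne, hsum, hone, ⟨X, hXP, hXx, hXm⟩, ⟨t, htP, hty⟩⟩ := hI
        have htX : t ≠ X := by
          intro h; rw [h, hXx] at hty
          cases x <;> simp_all
        have : t ∈ P.erase X := (Multiset.mem_erase_of_ne htX).mpr htP
        have h1 := Multiset.card_erase_of_mem hXP
        rw [Nat.pred_eq_sub_one] at h1
        have h0 : 0 < Multiset.card (P.erase X) :=
          Multiset.card_pos_iff_exists_mem.mpr ⟨t, this⟩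
        have : 0 < Multiset.card P := Multiset.card_pos_iff_exists_mem.mpr ⟨X, hXP⟩
        omega
      have h3 : 3 ≤ Multiset.card P := by
        obtain ⟨k, hk⟩ := hodd
        omega
      obtain ⟨Q, hmv⟩ := exists_move hI h3
      obtain ⟨hIQ, hcQ⟩ := inv_sum_move hI hmv
      have hneven : Even n := by
        obtain ⟨k, hk⟩ := hodd; exact ⟨k, by omega⟩
      exact ⟨Q, hmv, (ih Q hIQ (by omega)).1 hneven⟩


/-- Lemma 1: if the total number of chips is `2 * m`, the number of stacks is
even, exactly one stack `X` has color `x`, the height of `X` exceeds `m`, and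
at least one stack has the other color, then the position is not a
first-player win. -/
theorem lemma1 (m : ℕ) (P : Position) (x : Bool) (X : Stack)
    (hne : ∀ s ∈ P, s ≠ [])
    (hchips : (P.map List.length).sum = 2 * m)
    (heven : Even (Multiset.card P))
    (hX : X ∈ P) (hXcol : X.head? = some x)
    (hone : Multiset.card (P.filter (fun s => s.head? = some x)) = 1)
    (hy : ∃ t ∈ P, t.head? = some (!x))
    (hht : m < X.length) :
    ¬ FirstWin P := by
  have hI : BabInv m x P := ⟨hne, hchips, hone, ⟨X, hX, hXcol, hht⟩, hy⟩
  exact (key m x (Multiset.card P) P hI rfl).1 heven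
end

section
/- In two-color Babylon with initial position consisting of p red singleton stacks and q blue singleton stacks, if p+q is even and 1 ≤ p ≤ 2 with p ≤ q, then the initial position is a first-player win: Alice has a winning strategy. -/
lemma head_append {s t : Stack} (h : s.head? = some false) :
    (s ++ t).head? = some false := by
  cases s with
  | nil => simp at h
  | cons a s => simpa using h

lemma move_card {P Q : Position} (h : Move P Q) :
    Multiset.card P = Multiset.card Q + 1 := by
  obtain ⟨s, t, _, _, hs, ht, _, rfl⟩ := h
  have h1 : Multiset.card (P.erase s) = Multiset.card P - 1 := by
    rw [Multiset.card_erase_of_mem hs]; rfl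
  have h2 : Multiset.card ((P.erase s).erase t) = Multiset.card (P.erase s) - 1 := by
    rw [Multiset.card_erase_of_mem ht]; rfl
  have h3 : 0 < Multiset.card (P.erase s) := Multiset.card_pos.mpr
    (fun h0 => by simp [h0] at ht)
  have h4 : 0 < Multiset.card P := Multiset.card_pos.mpr
    (fun h0 => by simp [h0] at hs)
  simp only [Multiset.card_cons]
  omega

/-- All-blue positions: the first player wins iff the number of stacks is
even (and nonzero). -/
lemma allblue (n : ℕ) : ∀ P : Position, Multiset.card P = n →
    (∀ u ∈ P, u.head? = some false) →
    (FirstWinAux n P ↔ (Even n ∧ n ≠ 0)) := by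
  induction n with
  | zero => intro P _ _; simp [FirstWinAux]
  | succ n ih =>
    intro P hcard hblue
    constructor
    · rintro ⟨Q, hm, hQ⟩
      have hc : Multiset.card P = Multiset.card Q + 1 := move_card hm
      have hQc : Multiset.card Q = n := by omega
      have hQblue : ∀ u ∈ Q, u.head? = some false := by
        obtain ⟨s, t, _, _, hs, ht, _, rfl⟩ := hm
        intro u hu
        rcases Multiset.mem_cons.mp hu with rfl | hu'
        · exact head_append (hblue s hs)
        · exact hblue u (Multiset.mem_of_mem_erase (Multiset.mem_of_mem_erase hu'))
      have hn0 : n ≠ 0 := by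
        intro h0
        subst h0
        obtain ⟨s, t, _, _, hs, ht, _, _⟩ := hm
        have h3 : 0 < Multiset.card (P.erase s) := Multiset.card_pos.mpr
          (fun h0 => by simp [h0] at ht)
        have h1 : Multiset.card (P.erase s) = Multiset.card P - 1 := by
          rw [Multiset.card_erase_of_mem hs]; rfl
        omega
      have hiff := (ih Q hQc hQblue).not.mp hQ
      have hne : ¬ Even n := by tauto
      refine ⟨?_, by omega⟩
      rcases Nat.even_or_odd n with h | h
      · exact absurd h hne
      · obtain ⟨k, hk⟩ := h; exact ⟨k + 1, by omega⟩
    · rintro ⟨he, -⟩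
      have hne : ¬ Even n := by
        rintro ⟨k, hk⟩; obtain ⟨j, hj⟩ := he; omega
      have hn1 : 1 ≤ n := Nat.one_le_iff_ne_zero.mpr
        (fun h => hne (h ▸ Even.zero))
      have hP0 : P ≠ 0 := by
        intro h0; simp [h0] at hcard
      obtain ⟨s, hs⟩ := Multiset.exists_mem_of_ne_zero hP0
      have hce : Multiset.card (P.erase s) = n := by
        rw [Multiset.card_erase_of_mem hs, hcard]; rfl
      have he0 : P.erase s ≠ 0 := by
        intro h0; rw [h0] at hce; simp at hce; omega
      obtain ⟨t, ht⟩ := Multiset.exists_mem_of_ne_zero he0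
      have hbs := hblue s hs
      have hbt := hblue t (Multiset.mem_of_mem_erase ht)
      have hsne : s ≠ [] := by intro h; simp [h] at hbs
      have htne : t ≠ [] := by intro h; simp [h] at hbt
      refine ⟨(s ++ t) ::ₘ (P.erase s).erase t,
        ⟨s, t, hsne, htne, hs, ht, Or.inr (hbs.trans hbt.symm), rfl⟩, ?_⟩
      have hc1 : Multiset.card ((P.erase s).erase t) = n - 1 := by
        rw [Multiset.card_erase_of_mem ht, hce]; rfl
      have hcQ : Multiset.card ((s ++ t) ::ₘ (P.erase s).erase t) = n := by
        rw [Multiset.card_cons, hc1]; omega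
      have hbQ : ∀ u ∈ (s ++ t) ::ₘ (P.erase s).erase t, u.head? = some false := by
        intro u hu
        rcases Multiset.mem_cons.mp hu with rfl | hu'
        · exact head_append hbs
        · exact hblue u (Multiset.mem_of_mem_erase (Multiset.mem_of_mem_erase hu'))
      rw [ih _ hcQ hbQ]
      tauto

/-- If `p + q` is even, `1 ≤ p ≤ 2` and `p ≤ q`, then the initial position
with `p` red and `q` blue singletons is a first-player win. -/
theorem alice_wins_even_small (p q : ℕ) (heven : Even (p + q))
    (hp1 : 1 ≤ p) (hp2 : p ≤ 2) (hpq : p ≤ q) :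
    FirstWin (initPos p q) := by
  interval_cases p
  · -- p = 1 : put a blue singleton on the red singleton, all blue afterwards
    obtain ⟨m, rfl⟩ : ∃ m, q = m + 1 := ⟨q - 1, by omega⟩
    have hodd : ¬ Even (m + 1) := by
      rintro ⟨k, hk⟩; obtain ⟨j, hj⟩ := heven; omega
    have hP : initPos 1 (m + 1)
        = [true] ::ₘ [false] ::ₘ Multiset.replicate m [false] := by
      rw [initPos, Multiset.replicate_one, Multiset.replicate_succ,
        Multiset.singleton_add]
    have hcard : Multiset.card (initPos 1 (m + 1)) = m + 2 := by
      simp [initPos]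
    rw [FirstWin, hcard]
    show ∃ Q, Move _ Q ∧ ¬ FirstWinAux (m + 1) Q
    refine ⟨[false, true] ::ₘ Multiset.replicate m [false],
      ⟨[false], [true], by simp, by simp, ?_, ?_, Or.inl rfl, ?_⟩, ?_⟩
    · rw [hP]; exact Multiset.mem_cons_of_mem (Multiset.mem_cons_self _ _)
    · rw [hP, Multiset.erase_cons_tail _ (by decide), Multiset.erase_cons_head]
      exact Multiset.mem_cons_self _ _
    · rw [hP, Multiset.erase_cons_tail _ (by decide), Multiset.erase_cons_head,
        Multiset.erase_cons_head]; rfl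
    · rw [allblue (m+1) _ (by simp) ?_]
      · tauto
      · intro u hu
        rcases Multiset.mem_cons.mp hu with rfl | hu'
        · rfl
        · simp [Multiset.eq_of_mem_replicate hu']
  · -- p = 2 : merge the two reds
    obtain ⟨m, rfl⟩ : ∃ m, q = m + 2 := ⟨q - 2, by omega⟩
    have hmev : Even m := by
      obtain ⟨j, hj⟩ := heven; exact ⟨j - 2, by omega⟩
    have hP : initPos 2 (m + 2)
        = [true] ::ₘ [true] ::ₘ Multiset.replicate (m+2) [false] := by
      rw [initPos, show (2:ℕ) = 1 + 1 from rfl, Multiset.replicate_succ,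
        Multiset.replicate_one, Multiset.cons_add, Multiset.singleton_add]
    have hcard : Multiset.card (initPos 2 (m + 2)) = m + 4 := by
      simp [initPos]
    rw [FirstWin, hcard]
    show ∃ Q, Move _ Q ∧ ¬ FirstWinAux (m + 3) Q
    refine ⟨[true, true] ::ₘ Multiset.replicate (m+2) [false],
      ⟨[true], [true], by simp, by simp, ?_, ?_, Or.inl rfl, ?_⟩, ?_⟩
    · rw [hP]; exact Multiset.mem_cons_self _ _
    · rw [hP, Multiset.erase_cons_head]; exact Multiset.mem_cons_self _ _
    · rw [hP, Multiset.erase_cons_head, Multiset.erase_cons_head]; rfl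
    -- Position Q1 = [true,true] ::ₘ (m+2) blues; Bob can only merge two blues.
    rintro ⟨Q2, ⟨s, t, hs0, ht0, hs, ht, hleg, rfl⟩, hQ2⟩
    apply hQ2; clear hQ2
    have hre : (Multiset.replicate (m+2) ([false] : Stack)).erase [false]
        = Multiset.replicate (m+1) [false] := by
      rw [Multiset.replicate_succ, Multiset.erase_cons_head]
    have hsc : s = [true, true] ∨ s = [false] := by
      rcases Multiset.mem_cons.mp hs with h | h
      · exact Or.inl h
      · exact Or.inr (Multiset.eq_of_mem_replicate h)
    rcases hsc with rfl | rfl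
    · -- s = [true,true] : no legal partner
      rw [Multiset.erase_cons_head] at ht
      rw [Multiset.eq_of_mem_replicate ht] at hleg
      simp at hleg
    · -- s = [false]
      rw [Multiset.erase_cons_tail _ (by decide), hre] at ht
      have htc : t = [true, true] ∨ t = [false] := by
        rcases Multiset.mem_cons.mp ht with h | h
        · exact Or.inl h
        · exact Or.inr (Multiset.eq_of_mem_replicate h)
      rcases htc with rfl | rfl
      · simp at hleg
      · -- Bob merged two blues; Alice plays [false,false] on [true,true]
        have hQ2eq : (([false] ++ [false]) ::ₘ
            (([true, true] ::ₘ Multiset.replicate (m+2) [false]).erase [false]).erase [false])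
            = [false, false] ::ₘ [true, true] ::ₘ Multiset.replicate m [false] := by
          rw [Multiset.erase_cons_tail _ (by decide), hre,
            Multiset.erase_cons_tail _ (by decide), Multiset.replicate_succ,
            Multiset.erase_cons_head]
          rfl
        rw [hQ2eq]
        show ∃ Q, Move _ Q ∧ ¬ FirstWinAux (m + 1) Q
        refine ⟨[false, false, true, true] ::ₘ Multiset.replicate m [false],
          ⟨[false, false], [true, true], by simp, by simp,
            Multiset.mem_cons_self _ _, ?_, Or.inl rfl, ?_⟩, ?_⟩
        · rw [Multiset.erase_cons_head]; exact Multiset.mem_cons_self _ _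
        · rw [Multiset.erase_cons_head, Multiset.erase_cons_head]; rfl
        · rw [allblue (m+1) _ (by simp) ?_]
          · rintro ⟨⟨k, hk⟩, -⟩
            obtain ⟨j, hj⟩ := hmev; omega
          · intro u hu
            rcases Multiset.mem_cons.mp hu with rfl | hu'
            · rfl
            · simp [Multiset.eq_of_mem_replicate hu']
end
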